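/- For a scalar vector field X = ξ ∂_x + τ ∂_t + φ ∂_u with characteristic Q = φ − ξ u_x − τ u_t, the first-order μ-prolongation coefficients satisfy Ψ^x = φ^x + λ Q and Ψ^t = φ^t + τ₂ Q, where φ^x, φ^t are the ordinary first prolongation coefficients and μ = λ dx + τ₂ dt. -/

import Mathlib

/- Jet coordinates: 0 = x, 1 = t, 2 = u, 3 = u_x, 4 = u_t,
   5 = u_xx, 6 = u_xt, 7 = u_tt. -/

noncomputable def pd (i : Fin 8) (F : (Fin 8 → ℝ) → ℝ) (p : Fin 8 → ℝ) : ℝ :=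
  fderiv ℝ F p (Pi.single i 1)

/-- Total derivative in `x`. -/
noncomputable def Dx (F : (Fin 8 → ℝ) → ℝ) (p : Fin 8 → ℝ) : ℝ :=
  pd 0 F p + p 3 * pd 2 F p + p 5 * pd 3 F p + p 6 * pd 4 F p

/-- Total derivative in `t`. -/
noncomputable def Dt (F : (Fin 8 → ℝ) → ℝ) (p : Fin 8 → ℝ) : ℝ :=
  pd 1 F p + p 4 * pd 2 F p + p 6 * pd 3 F p + p 7 * pd 4 F p

lemma pd_coord_mem (i j : Fin 8) (F : (Fin 8 → ℝ) → ℝ) (p : Fin 8 → ℝ)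
    (hF : DifferentiableAt ℝ F p) :
    pd i (fun q => F q * q j) p = pd i F p * p j + F p * (Pi.single i 1 : Fin 8 → ℝ) j := by
  have hco : DifferentiableAt ℝ (fun q : Fin 8 → ℝ => q j) p :=
    (ContinuousLinearMap.proj j : (Fin 8 → ℝ) →L[ℝ] ℝ).differentiableAt
  have h := fderiv_fun_mul (𝕜 := ℝ) hF hco
  unfold pd
  rw [h]
  have hcf : fderiv ℝ (fun q : Fin 8 → ℝ => q j) p
      = (ContinuousLinearMap.proj j : (Fin 8 → ℝ) →L[ℝ] ℝ) :=
    (ContinuousLinearMap.proj j : (Fin 8 → ℝ) →L[ℝ] ℝ).fderiv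
  simp [hcf]
  ring

lemma pd_charlike (A B C : (Fin 8 → ℝ) → ℝ)
    (hA : DifferentiableAt ℝ A p) (hB : DifferentiableAt ℝ B p)
    (hC : DifferentiableAt ℝ C p) (i : Fin 8) :
    pd i (fun q => A q - B q * q 3 - C q * q 4) p
      = pd i A p - (pd i B p * p 3 + B p * (Pi.single i 1 : Fin 8 → ℝ) 3)
        - (pd i C p * p 4 + C p * (Pi.single i 1 : Fin 8 → ℝ) 4) := by
  have h3 : DifferentiableAt ℝ (fun q : Fin 8 → ℝ => q 3) p :=
    (ContinuousLinearMap.proj (3 : Fin 8) : (Fin 8 → ℝ) →L[ℝ] ℝ).differentiableAt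
  have h4 : DifferentiableAt ℝ (fun q : Fin 8 → ℝ => q 4) p :=
    (ContinuousLinearMap.proj (4 : Fin 8) : (Fin 8 → ℝ) →L[ℝ] ℝ).differentiableAt
  have hB3 : DifferentiableAt ℝ (fun q => B q * q 3) p := hB.mul h3
  have hC4 : DifferentiableAt ℝ (fun q => C q * q 4) p := hC.mul h4
  unfold pd
  rw [fderiv_fun_sub (f := fun q => A q - B q * q 3) (hA.sub hB3) hC4, fderiv_fun_sub hA hB3]
  simp only [ContinuousLinearMap.sub_apply]
  have e1 := pd_coord_mem i 3 B p hB
  have e2 := pd_coord_mem i 4 C p hC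
  unfold pd at e1 e2
  rw [e1, e2]

/-- For X = ξ ∂_x + τ ∂_t + φ ∂_u with characteristic
Q = φ − ξ u_x − τ u_t, the first-order μ-prolongation coefficients (for
μ = λ dx + τ₂ dt) satisfy Ψ^x = φ^x + λ Q and Ψ^t = φ^t + τ₂ Q, where
φ^x = D_x Q + ξ u_xx + τ u_xt and φ^t = D_t Q + ξ u_xt + τ u_tt are the
ordinary first prolongation coefficients and
Ψ^x = (D_x+λ)φ − u_x (D_x+λ)ξ − u_t (D_x+λ)τ (and analogously for Ψ^t). -/
theorem first_order_mu_prolongation_formula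
    (ξ τ φ : ℝ → ℝ → ℝ → ℝ)
    (hξ : ContDiff ℝ (⊤ : ℕ∞) fun q : ℝ × ℝ × ℝ => ξ q.1 q.2.1 q.2.2)
    (hτ : ContDiff ℝ (⊤ : ℕ∞) fun q : ℝ × ℝ × ℝ => τ q.1 q.2.1 q.2.2)
    (hφ : ContDiff ℝ (⊤ : ℕ∞) fun q : ℝ × ℝ × ℝ => φ q.1 q.2.1 q.2.2)
    (lam tau₂ : (Fin 8 → ℝ) → ℝ)
    -- lifts of ξ, τ, φ and of the characteristic Q to the jet space:
    (ξJ τJ φJ Q : (Fin 8 → ℝ) → ℝ)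
    (hξJ : ∀ p, ξJ p = ξ (p 0) (p 1) (p 2))
    (hτJ : ∀ p, τJ p = τ (p 0) (p 1) (p 2))
    (hφJ : ∀ p, φJ p = φ (p 0) (p 1) (p 2))
    (hQ : ∀ p, Q p = φJ p - ξJ p * p 3 - τJ p * p 4)
    -- ordinary first prolongation coefficients:
    (φx φt : (Fin 8 → ℝ) → ℝ)
    (hφx : ∀ p, φx p = Dx Q p + ξJ p * p 5 + τJ p * p 6)
    (hφt : ∀ p, φt p = Dt Q p + ξJ p * p 6 + τJ p * p 7)
    -- μ-prolongation coefficients: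
    (Ψx Ψt : (Fin 8 → ℝ) → ℝ)
    (hΨx : ∀ p, Ψx p = (Dx φJ p + lam p * φJ p)
      - p 3 * (Dx ξJ p + lam p * ξJ p) - p 4 * (Dx τJ p + lam p * τJ p))
    (hΨt : ∀ p, Ψt p = (Dt φJ p + tau₂ p * φJ p)
      - p 3 * (Dt ξJ p + tau₂ p * ξJ p) - p 4 * (Dt τJ p + tau₂ p * τJ p)) :
    ∀ p, Ψx p = φx p + lam p * Q p ∧ Ψt p = φt p + tau₂ p * Q p := by
  -- differentiability of the lifts
  have hL : Differentiable ℝ (fun p : Fin 8 → ℝ => ((p 0, p 1, p 2) : ℝ × ℝ × ℝ)) := by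
    apply Differentiable.prodMk
    · exact (ContinuousLinearMap.proj (0 : Fin 8) : (Fin 8 → ℝ) →L[ℝ] ℝ).differentiable
    apply Differentiable.prodMk
    · exact (ContinuousLinearMap.proj (1 : Fin 8) : (Fin 8 → ℝ) →L[ℝ] ℝ).differentiable
    · exact (ContinuousLinearMap.proj (2 : Fin 8) : (Fin 8 → ℝ) →L[ℝ] ℝ).differentiable
  have hξJ' : ξJ = fun p => ξ (p 0) (p 1) (p 2) := funext hξJ
  have hτJ' : τJ = fun p => τ (p 0) (p 1) (p 2) := funext hτJ
  have hφJ' : φJ = fun p => φ (p 0) (p 1) (p 2) := funext hφJ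
  have hQ' : Q = fun p => φJ p - ξJ p * p 3 - τJ p * p 4 := funext hQ
  have dξ : Differentiable ℝ ξJ := by
    rw [hξJ']; exact (hξ.differentiable (by simp)).comp hL
  have dτ : Differentiable ℝ τJ := by
    rw [hτJ']; exact (hτ.differentiable (by simp)).comp hL
  have dφ : Differentiable ℝ φJ := by
    rw [hφJ']; exact (hφ.differentiable (by simp)).comp hL
  intro p
  have key : ∀ i : Fin 8, pd i Q p
      = pd i φJ p - (pd i ξJ p * p 3 + ξJ p * (Pi.single i 1 : Fin 8 → ℝ) 3)
        - (pd i τJ p * p 4 + τJ p * (Pi.single i 1 : Fin 8 → ℝ) 4) := by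
    intro i
    rw [hQ']
    exact pd_charlike φJ ξJ τJ (dφ p) (dξ p) (dτ p) i
  have DxQ : Dx Q p = Dx φJ p - p 3 * Dx ξJ p - ξJ p * p 5
      - p 4 * Dx τJ p - τJ p * p 6 := by
    unfold Dx
    rw [key 0, key 2, key 3, key 4]
    simp [Pi.single_apply]
    ring
  have DtQ : Dt Q p = Dt φJ p - p 3 * Dt ξJ p - ξJ p * p 6
      - p 4 * Dt τJ p - τJ p * p 7 := by
    unfold Dt
    rw [key 1, key 2, key 3, key 4]
    simp [Pi.single_apply]
    ring
  constructor
  · rw [hΨx p, hφx p, DxQ, hQ p]; ring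
  · rw [hΨt p, hφt p, DtQ, hQ p]; ring
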